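/- Example (v) in combinatorial form: let X be a type, n : ℕ, and let a₁, …, aₙ : X be pairwise distinct letters. Then the polygon word [(a₁,true),(a₂,true),…,(aₙ,true),(a₁,false),(a₂,false),…,(aₙ,false)] is ∼-equivalent to the connected sum of ⌊n/2⌋ tori: if n is even it is equivalent to [(a₁,true),(a₂,true),(a₁,false),(a₂,false),…,(aₙ₋₁,true),(aₙ,true),(aₙ₋₁,false),(aₙ,false)] reindexed over ⌊n/2⌋ disjoint pairs of distinct letters of X, and if n ≤ 1 it is equivalent to []. Precisely: there exist pairwise distinct letters c₁, d₁, …, c_m, d_m : X with m = ⌊n/2⌋ such that [(a₁,true),…,(aₙ,true),(a₁,false),…,(aₙ,false)] ∼ [(c₁,true),(d₁,true),(c₁,false),(d₁,false),…,(c_m,true),(d_m,true),(c_m,false),(d_m,false)]. -/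

import Mathlib

namespace Surface

/-- A signed word over `X`: the entry `(a, true)` represents the edge `a`, and
`(a, false)` represents its inverse `ā`. -/
abbrev Word (X : Type*) := List (X × Bool)

/-- The inverse of a signed word: reverse it and negate every `Bool`. -/
def wordInv {X : Type*} (w : Word X) : Word X :=
  (w.map fun p => (p.1, !p.2)).reverse

/-- The letter `a` occurs in the signed word `w`. -/
def Occurs {X : Type*} (a : X) (w : Word X) : Prop :=
  ∃ s : Bool, (a, s) ∈ w

/-- A polygon word: every letter that occurs, occurs exactly twice (counting `(a,true)`
and `(a,false)` together). -/
def IsPolygon {X : Type*} [DecidableEq X] (w : Word X) : Prop :=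
  ∀ a : X, Occurs a w → (w.map Prod.fst).count a = 2

/-- The smallest equivalence relation on signed words closed under cyclicity, inversion,
cancellation, the discord rule and the concord rule. -/
inductive WEquiv {X : Type*} : Word X → Word X → Prop
  | refl (w : Word X) : WEquiv w w
  | symm {w v : Word X} : WEquiv w v → WEquiv v w
  | trans {w v u : Word X} : WEquiv w v → WEquiv v u → WEquiv w u
  /-- (1) cyclicity -/
  | cyc (α : Word X) (x : X × Bool) : WEquiv (α ++ [x]) ([x] ++ α)
  /-- (2) inversion -/
  | inv (w : Word X) : WEquiv w (wordInv w)
  /-- (3) cancellation -/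
  | cancel (α : Word X) (a : X) (s : Bool) (hα : ¬ Occurs a α) :
      WEquiv (α ++ [(a, s), (a, !s)]) α
  /-- (4) discord rule -/
  | discord (α β β' : Word X) (a : X) (s : Bool)
      (hα : ¬ Occurs a α) (hβ : ¬ Occurs a β) (hβ' : ¬ Occurs a β') :
      WEquiv (α ++ [(a, s)] ++ β ++ β' ++ [(a, !s)])
             (α ++ [(a, s)] ++ β' ++ β ++ [(a, !s)])
  /-- (5) concord rule -/
  | concord (α β : Word X) (a : X) (s : Bool)
      (hα : ¬ Occurs a α) (hβ : ¬ Occurs a β) :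
      WEquiv (α ++ [(a, s)] ++ β ++ [(a, s)])
             (α ++ wordInv β ++ [(a, s), (a, s)])

/-- The word `a₁a₁a₂a₂⋯aₖaₖ`, representing the connected sum of `k` projective planes. -/
def PWord {X : Type*} {k : ℕ} (a : Fin k → X) : Word X :=
  (List.ofFn fun i => [(a i, true), (a i, true)]).flatten

/-- The word `a₁b₁ā₁b̄₁⋯aₙbₙāₙb̄ₙ`, representing the connected sum of `n` tori. -/
def TWord {X : Type*} {n : ℕ} (a b : Fin n → X) : Word X :=
  (List.ofFn fun i => [(a i, true), (b i, true), (a i, false), (b i, false)]).flatten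

/-- `w` contains a concord pair: some letter occurs twice with the same sign. -/
def HasConcordPair {X : Type*} (w : Word X) : Prop :=
  ∃ (a : X) (s : Bool) (α β γ : Word X),
    w = α ++ [(a, s)] ++ β ++ [(a, s)] ++ γ

/-- `w` contains two interleaved pairs: letters `a ≠ b` occurring in the pattern
`⋯a⋯b⋯a⋯b⋯`. -/
def HasInterleaved {X : Type*} (w : Word X) : Prop :=
  ∃ (a b : X) (s s' t t' : Bool) (α β γ δ ε : Word X), a ≠ b ∧
    w = α ++ [(a, s)] ++ β ++ [(b, t)] ++ γ ++ [(a, s')] ++ δ ++ [(b, t')] ++ ε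

/-! Handles are split off one at a time: `u x y R x̄ ȳ S ∼ u x y x̄ ȳ R S` by two discord moves,
each made applicable by a rotation. Applied to the first two letters of `a₁⋯aₙā₁⋯āₙ` this leaves
the word `a₃⋯aₙā₃⋯āₙ` behind the new handle, and a single remaining letter cancels with its
inverse. As `∼` is not compatible with concatenation, the induction carries the handles already
split off as a prefix `u`. -/

section

variable {X : Type*}

local infix:50 " ∼ " => WEquiv

instance : Trans (@WEquiv X) (@WEquiv X) (@WEquiv X) := ⟨WEquiv.trans⟩

@[simp]
theorem not_occurs_nil (a : X) : ¬ Occurs a ([] : Word X) := by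
  simp [Occurs]

@[simp]
theorem occurs_cons {a : X} {p : X × Bool} {w : Word X} :
    Occurs a (p :: w) ↔ a = p.1 ∨ Occurs a w := by
  obtain ⟨b, t⟩ := p
  simp [Occurs, exists_or, Prod.ext_iff]

@[simp]
theorem occurs_append {a : X} {u v : Word X} :
    Occurs a (u ++ v) ↔ Occurs a u ∨ Occurs a v := by
  simp [Occurs, exists_or]

@[simp]
theorem occurs_map_sign {a : X} {l : List X} {s : Bool} :
    Occurs a (l.map (·, s)) ↔ a ∈ l := by
  simp [Occurs]

theorem WEquiv.append_comm (u v : Word X) : u ++ v ∼ v ++ u := by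
  induction u generalizing v with
  | nil => simpa using .refl v
  | cons x u ih =>
    calc x :: u ++ v ∼ u ++ v ++ [x] := by simpa using (WEquiv.cyc (u ++ v) x).symm
      _ ∼ v ++ [x] ++ u := by simpa using ih (v ++ [x])
      _ = v ++ x :: u := by simp

def handle (p : X × X) : Word X := [(p.1, true), (p.2, true), (p.1, false), (p.2, false)]

theorem WEquiv.gather_handle {x y : X} (hxy : x ≠ y) {u R S : Word X}
    (hx : ¬ Occurs x (u ++ R ++ S)) (hy : ¬ Occurs y (u ++ R ++ S)) :
    u ++ (x, true) :: (y, true) :: (R ++ (x, false) :: (y, false) :: S) ∼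
      u ++ handle (x, y) ++ R ++ S := by
  simp only [occurs_append, not_or] at hx hy
  calc u ++ (x, true) :: (y, true) :: (R ++ (x, false) :: (y, false) :: S)
      ∼ (y, false) :: (S ++ u ++ (x, true) :: (y, true) :: R ++ [(x, false)]) := by
        simpa using WEquiv.append_comm (u ++ (x, true) :: (y, true) :: R ++ [(x, false)])
          ((y, false) :: S)
    _ ∼ (y, false) :: (S ++ u ++ (x, true) :: R ++ (y, true) :: [(x, false)]) := by
        simpa using WEquiv.discord ((y, false) :: (S ++ u)) [(y, true)] R x true
          (by simp [hxy, hx]) (by simp [hxy]) hx.1.2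
    _ ∼ (x, false) :: (y, false) :: (S ++ u ++ (x, true) :: R ++ [(y, true)]) := by
        simpa using WEquiv.append_comm ((y, false) :: (S ++ u ++ (x, true) :: R ++ [(y, true)]))
          [(x, false)]
    _ ∼ (x, false) :: (y, false) :: (R ++ S ++ u ++ [(x, true), (y, true)]) := by
        simpa using WEquiv.discord [(x, false)] (S ++ u ++ [(x, true)]) R y false
          (by simp [hxy.symm]) (by simp [hxy.symm, hy]) hy.1.2
    _ ∼ u ++ handle (x, y) ++ R ++ S := by
        simpa [handle] using WEquiv.append_comm ((x, false) :: (y, false) :: (R ++ S))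
          (u ++ [(x, true), (y, true)])

def pairUp : List X → List (X × X)
  | [] => []
  | [_] => []
  | x :: y :: l => (x, y) :: pairUp l

theorem length_pairUp (l : List X) : (pairUp l).length = l.length / 2 := by
  induction l using pairUp.induct with
  | case1 | case2 => simp [pairUp]
  | case3 x y l ih =>
    simp only [pairUp, List.length_cons, ih]
    omega

theorem getElem_pairUp (l : List X) (i : ℕ) (hi : i < (pairUp l).length) :
    (pairUp l)[i] = (l[2 * i]'(by rw [length_pairUp] at hi; omega),
      l[2 * i + 1]'(by rw [length_pairUp] at hi; omega)) := by
  induction l using pairUp.induct generalizing i with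
  | case1 | case2 => simp [pairUp] at hi
  | case3 x y l ih =>
    cases i with
    | zero => simp [pairUp]
    | succ i => simpa [pairUp, Nat.mul_succ] using ih i (by simpa [pairUp] using hi)

theorem pairUp_ofFn {n : ℕ} (a : Fin n → X) :
    pairUp (List.ofFn a) = List.ofFn fun i : Fin (n / 2) =>
      (a ⟨2 * i, by omega⟩, a ⟨2 * i + 1, by omega⟩) := by
  apply List.ext_getElem
  · simp [length_pairUp]
  · intro i _ _
    simp [getElem_pairUp]

theorem tWord_eq_flatMap {k : ℕ} (c d : Fin k → X) :
    TWord c d = (List.ofFn fun i => (c i, d i)).flatMap handle := by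
  simp [TWord, List.flatMap, List.map_ofFn, Function.comp_def, handle]

theorem WEquiv.pos_append_neg {l : List X} (hl : l.Nodup) {u : Word X}
    (hu : ∀ a ∈ l, ¬ Occurs a u) :
    u ++ l.map (·, true) ++ l.map (·, false) ∼ u ++ (pairUp l).flatMap handle := by
  induction l using pairUp.induct generalizing u with
  | case1 => simpa [pairUp] using .refl u
  | case2 x => simpa [pairUp] using WEquiv.cancel u x true (hu x (by simp))
  | case3 x y l ih =>
    simp only [List.nodup_cons, List.mem_cons, not_or] at hl
    obtain ⟨⟨hxy, hxl⟩, hyl, hl⟩ := hl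
    have hu' : ∀ a ∈ l, ¬ Occurs a (u ++ handle (x, y)) := by
      intro a ha
      simp [handle, hu a (by simp [ha]), ne_of_mem_of_not_mem ha hxl,
        ne_of_mem_of_not_mem ha hyl]
    calc u ++ (x :: y :: l).map (·, true) ++ (x :: y :: l).map (·, false)
        = u ++ (x, true) :: (y, true) :: (l.map (·, true) ++ (x, false) :: (y, false) ::
            l.map (·, false)) := by simp
      _ ∼ u ++ handle (x, y) ++ l.map (·, true) ++ l.map (·, false) :=
          .gather_handle hxy (by simp [hu x, hxl]) (by simp [hu y, hyl])
      _ ∼ u ++ handle (x, y) ++ (pairUp l).flatMap handle := ih hl hu'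
      _ = u ++ (pairUp (x :: y :: l)).flatMap handle := by simp [pairUp]

end

/-- Example (v) in combinatorial form: for pairwise distinct letters `a₁, …, aₙ`, the
polygon word `a₁⋯aₙā₁⋯āₙ` is equivalent to a connected sum of `⌊n/2⌋` tori. -/
theorem example_v_word {X : Type*} (n : ℕ) (a : Fin n → X) (ha : Function.Injective a) :
    ∃ c d : Fin (n / 2) → X, Function.Injective (Sum.elim c d) ∧
      WEquiv ((List.ofFn fun i => (a i, true)) ++ (List.ofFn fun i => (a i, false)))
             (TWord c d) := by
  refine ⟨fun i => a ⟨2 * i, by omega⟩, fun i => a ⟨2 * i + 1, by omega⟩, ?_, ?_⟩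
  · rintro (i | i) (j | j) h <;> simp [ha.eq_iff, Fin.ext_iff] at h ⊢ <;> omega
  · simpa [List.map_ofFn, Function.comp_def, pairUp_ofFn, tWord_eq_flatMap] using
      WEquiv.pos_append_neg (List.nodup_ofFn.2 ha) (u := []) (by simp)

end Surface
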